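/- Let f : X → ℂ be a continuous map, c : X → X an involution, and conj complex conjugation on ℂ, with f ∘ c = conj ∘ f. Let γ be a path in the upper half plane from ε to -ε (ε > 0 real) avoiding 0. Then the concatenation of γ with conj ∘ γ⁻¹ (the conjugate reversed path) is a loop based at ε whose winding number around 0 is ±1. -/

import Mathlib

/-!
On `[0, 1/2]` the loop runs through the closed upper half plane and on `[1/2, 1]` through the
closed lower one, so a continuous argument `θ` has `sin θ ≥ 0` on the first half and
`sin θ ≤ 0` on the second. A preconnected set of reals on which `sin ≥ 0` cannot leave the
interval `[2πn, 2πn + π]` it starts in, hence `θ` increases by exactly `π` from `ε` to `-ε`;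
applied to `-loop` with argument `θ - π`, the same holds from `-ε` back to `ε`.
-/

open Real Set

lemma IsPreconnected.subset_Icc_zero_pi_of_sin_nonneg {s : Set ℝ} (hs : IsPreconnected s)
    (hsin : ∀ x ∈ s, 0 ≤ sin x) (h0 : (0 : ℝ) ∈ s) : s ⊆ Icc 0 π := by
  have hπ := pi_pos
  intro x hx
  constructor
  · by_contra! hneg
    set y := max x (-(π / 2))
    have hy : y ∈ s := hs.Icc_subset hx h0 ⟨le_max_left _ _, max_le hneg.le (by linarith)⟩
    exact (hsin y hy).not_gt <|
      sin_neg_of_neg_of_neg_pi_lt (max_lt hneg (by linarith)) (lt_max_of_lt_right (by linarith))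
  · by_contra! hbig
    set y := min x (3 * π / 2)
    have hy : y ∈ s := hs.Icc_subset h0 hx ⟨le_min (by linarith) (by linarith), min_le_left _ _⟩
    have hpos : 0 < sin (y - π) :=
      sin_pos_of_pos_of_lt_pi (sub_pos.2 (lt_min hbig (by linarith)))
        (by linarith [min_le_right x (3 * π / 2)])
    linarith [hsin y hy, sin_sub_pi y]

lemma sub_eq_pi_of_sin_nonneg {g : ℝ → ℝ} {a b : ℝ} (hab : a ≤ b)
    (hg : ContinuousOn g (Icc a b)) (hsin : ∀ t ∈ Icc a b, 0 ≤ sin (g t))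
    (ha : cos (g a) = 1) (hb : cos (g b) = -1) : g b - g a = π := by
  obtain ⟨n, hn⟩ := (cos_eq_one_iff _).1 ha
  have hshift : ∀ t, sin (g t - n * (2 * π)) = sin (g t) ∧ cos (g t - n * (2 * π)) = cos (g t) :=
    fun t => ⟨sin_sub_int_mul_two_pi _ _, cos_sub_int_mul_two_pi _ _⟩
  have hconn : IsPreconnected ((fun t => g t - n * (2 * π)) '' Icc a b) :=
    isPreconnected_Icc.image _ (hg.sub continuousOn_const)
  have hsub := hconn.subset_Icc_zero_pi_of_sin_nonneg
    (by rintro _ ⟨t, ht, rfl⟩; simpa [(hshift t).1] using hsin t ht)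
    ⟨a, left_mem_Icc.2 hab, by simp [hn]⟩
  have hgb : g b - n * (2 * π) = π :=
    injOn_cos (hsub ⟨b, right_mem_Icc.2 hab, rfl⟩) ⟨pi_pos.le, le_rfl⟩
      (by rw [(hshift b).2, hb, cos_pi])
  linarith

namespace Complex

lemma cos_eq_re_div_norm {z : ℂ} {x : ℝ} (hz : z ≠ 0) (h : z = ‖z‖ * exp (x * I)) :
    Real.cos x = z.re / ‖z‖ := by
  have hre : z.re = ‖z‖ * Real.cos x := by
    conv_lhs => rw [h]
    simp [mul_re, exp_ofReal_mul_I_re, exp_ofReal_mul_I_im]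
  rw [hre, mul_div_cancel_left₀ _ (norm_ne_zero_iff.2 hz)]

lemma sin_eq_im_div_norm {z : ℂ} {x : ℝ} (hz : z ≠ 0) (h : z = ‖z‖ * exp (x * I)) :
    Real.sin x = z.im / ‖z‖ := by
  have him : z.im = ‖z‖ * Real.sin x := by
    conv_lhs => rw [h]
    simp [mul_im, exp_ofReal_mul_I_re, exp_ofReal_mul_I_im]
  rw [him, mul_div_cancel_left₀ _ (norm_ne_zero_iff.2 hz)]

lemma neg_eq_norm_mul_exp_sub_pi {z : ℂ} {x : ℝ} (h : z = ‖z‖ * exp (x * I)) :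
    -z = ‖-z‖ * exp (↑(x - π) * I) := by
  rw [norm_neg, ofReal_sub, sub_mul, exp_sub, exp_pi_mul_I]
  conv_lhs => rw [h]
  ring

end Complex

lemma sub_eq_pi_of_im_pos {w : ℝ → ℂ} {θ : ℝ → ℝ} {a b r : ℝ} (hab : a ≤ b) (hr : 0 < r)
    (hwa : w a = r) (hwb : w b = -r) (him : ∀ t ∈ Ioo a b, 0 < (w t).im)
    (hθ : ContinuousOn θ (Icc a b))
    (hrep : ∀ t ∈ Icc a b, w t = ‖w t‖ * Complex.exp (θ t * Complex.I)) :
    θ b - θ a = π := by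
  have hupper : ∀ t ∈ Icc a b, w t ≠ 0 ∧ 0 ≤ (w t).im := by
    intro t ht
    rcases ht.1.eq_or_lt with rfl | hat
    · simp [hwa, hr.ne']
    rcases ht.2.eq_or_lt with rfl | htb
    · simp [hwb, hr.ne']
    have hpos := him t ⟨hat, htb⟩
    exact ⟨fun h => by simp [h] at hpos, hpos.le⟩
  have ha := left_mem_Icc.2 hab
  have hb := right_mem_Icc.2 hab
  refine sub_eq_pi_of_sin_nonneg hab hθ (fun t ht => ?_) ?_ ?_
  · rw [Complex.sin_eq_im_div_norm (hupper t ht).1 (hrep t ht)]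
    exact div_nonneg (hupper t ht).2 (norm_nonneg _)
  · rw [Complex.cos_eq_re_div_norm (hupper a ha).1 (hrep a ha), hwa]
    simp [abs_of_pos hr, hr.ne']
  · rw [Complex.cos_eq_re_div_norm (hupper b hb).1 (hrep b hb), hwb]
    simp [abs_of_pos hr, hr.ne']

theorem stmt_13_general
    (ε : ℝ) (hε : 0 < ε)
    (γ : ℝ → ℂ)
    (hγ0 : γ 0 = (ε : ℂ)) (hγ1 : γ 1 = -(ε : ℂ))
    (him : ∀ t ∈ Set.Ioo (0 : ℝ) 1, 0 < (γ t).im)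
    (loop : ℝ → ℂ)
    (hloop : ∀ t : ℝ, loop t =
      if t ≤ 1 / 2 then γ (2 * t) else starRingEnd ℂ (γ (2 - 2 * t))) :
    loop 0 = (ε : ℂ) ∧ loop 1 = (ε : ℂ) ∧
    ∀ θ : ℝ → ℝ, ContinuousOn θ (Set.Icc 0 1) →
      (∀ t ∈ Set.Icc (0 : ℝ) 1,
        loop t = (‖loop t‖ : ℂ) * Complex.exp (θ t * Complex.I)) →
      θ 1 - θ 0 = 2 * Real.pi ∨ θ 1 - θ 0 = -(2 * Real.pi) := by
  have hfirst : ∀ t ≤ 1 / 2, loop t = γ (2 * t) := fun t ht => by rw [hloop, if_pos ht]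
  have hsecond : ∀ t ≥ 1 / 2, loop t = starRingEnd ℂ (γ (2 - 2 * t)) := by
    intro t ht
    rw [hloop]
    split_ifs with h
    · obtain rfl : t = 1 / 2 := le_antisymm h ht
      norm_num [hγ1, Complex.conj_ofReal]
    · rfl
  have h0 : loop 0 = ε := by simpa [hγ0] using hfirst 0 (by norm_num)
  have hhalf : loop (1 / 2) = -ε := by simpa [hγ1] using hfirst (1 / 2) le_rfl
  have h1 : loop 1 = ε := by simpa [hγ0] using hsecond 1 (by norm_num)
  refine ⟨h0, h1, fun θ hθ hrep => Or.inl ?_⟩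
  have hturn₁ : θ (1 / 2) - θ 0 = π := by
    refine sub_eq_pi_of_im_pos (by norm_num) hε h0 hhalf (fun t ht => ?_)
      (hθ.mono (Icc_subset_Icc_right (by norm_num)))
      (fun t ht => hrep t ⟨ht.1, by linarith [ht.2]⟩)
    rw [hfirst t ht.2.le]
    exact him _ ⟨by linarith [ht.1], by linarith [ht.2]⟩
  have hturn₂ : (θ 1 - π) - (θ (1 / 2) - π) = π := by
    refine sub_eq_pi_of_im_pos (w := fun t => -loop t) (θ := fun t => θ t - π) (by norm_num) hε
      (by rw [hhalf, neg_neg]) (by rw [h1]) (fun t ht => ?_)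
      ((hθ.mono (Icc_subset_Icc_left (by norm_num))).sub continuousOn_const)
      (fun t ht => Complex.neg_eq_norm_mul_exp_sub_pi (hrep t ⟨by linarith [ht.1], ht.2⟩))
    rw [hsecond t ht.1.le, Complex.neg_im, Complex.conj_im, neg_neg]
    exact him _ ⟨by linarith [ht.2], by linarith [ht.1]⟩
  linarith

/-- For a real map `f` (i.e. `f ∘ c = conj ∘ f`) and a path `γ` in the upper
half plane from `ε` to `-ε` avoiding `0`, the loop obtained by concatenating
`γ` with its conjugate reversed path has winding number `±1` around `0`. -/
theorem stmt_13 {X : Type*} [TopologicalSpace X]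
    (f : X → ℂ) (hf : Continuous f)
    (c : X → X) (hc : ∀ p, c (c p) = p)
    (hfc : ∀ p, f (c p) = starRingEnd ℂ (f p))
    (ε : ℝ) (hε : 0 < ε)
    (γ : ℝ → ℂ) (hγ : ContinuousOn γ (Set.Icc 0 1))
    (hγ0 : γ 0 = (ε : ℂ)) (hγ1 : γ 1 = -(ε : ℂ))
    (hne : ∀ t ∈ Set.Icc (0 : ℝ) 1, γ t ≠ 0)
    (him : ∀ t ∈ Set.Ioo (0 : ℝ) 1, 0 < (γ t).im)
    (loop : ℝ → ℂ)
    (hloop : ∀ t : ℝ, loop t =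
      if t ≤ 1 / 2 then γ (2 * t) else starRingEnd ℂ (γ (2 - 2 * t))) :
    loop 0 = (ε : ℂ) ∧ loop 1 = (ε : ℂ) ∧
    ∀ θ : ℝ → ℝ, ContinuousOn θ (Set.Icc 0 1) →
      (∀ t ∈ Set.Icc (0 : ℝ) 1,
        loop t = (‖loop t‖ : ℂ) * Complex.exp (θ t * Complex.I)) →
      θ 1 - θ 0 = 2 * Real.pi ∨ θ 1 - θ 0 = -(2 * Real.pi) :=
  stmt_13_general ε hε γ hγ0 hγ1 him loop hloop
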